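/- arXiv:2101.07871 — 2 statements merged into one kernel-verified Lean document; each statement's English description precedes it below -/
import Mathlib

section
/- Let Ω' ⊂ ℝ² be a bounded open set and let H : Ω' → ℝ be Lipschitz with ‖∇H‖_{L∞} < ∞, and assume that the pushforward of Lebesgue measure satisfies H_♯(L²⌞Ω') = ρ L¹ with ρ ∈ L∞(ℝ). Then for every g ∈ BV(ℝ) ∩ L¹(ℝ) the composition g∘H belongs to BV(Ω') and Tot.Var._{Ω'}(g∘H) ≤ ‖∇H‖_{L∞} ‖ρ‖_{L∞} Tot.Var._ℝ(g). -/
open MeasureTheory Set Metric Filter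
open scoped ENNReal NNReal Topology
noncomputable section

/-- The plane `ℝ²` as a Euclidean space. -/
abbrev E2 := EuclideanSpace ℝ (Fin 2)

/-- Divergence of a (smooth) vector field on `ℝ²`. -/
def divg (Φ : E2 → E2) (x : E2) : ℝ :=
  ∑ i, fderiv ℝ Φ x (EuclideanSpace.single i 1) i

/-- A vector field is divergence-free in the sense of distributions. -/
def DivFree (b : E2 → E2) : Prop :=
  ∀ φ : E2 → ℝ, ContDiff ℝ (⊤ : ℕ∞) φ → HasCompactSupport φ →
    ∫ x, fderiv ℝ φ x (b x) = 0

/-- `ρ` is a distributional solution of `∂ₜ ρ + div (ρ b) = 0` on `(0,T) × ℝ²`. -/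
def SolvesContinuityEq (b : E2 → E2) (ρ : ℝ → E2 → ℝ) (T : ℝ≥0∞) : Prop :=
  ∀ φ : ℝ × E2 → ℝ, ContDiff ℝ (⊤ : ℕ∞) φ → HasCompactSupport φ →
    tsupport φ ⊆ {p : ℝ × E2 | 0 < p.1 ∧ ENNReal.ofReal p.1 < T} →
    ∫ p in {p : ℝ × E2 | 0 < p.1 ∧ ENNReal.ofReal p.1 < T}, ρ p.1 p.2 * fderiv ℝ φ p (1, b p.2) = 0

/-- Near incompressibility (for an autonomous vector field, on the time
interval `(0,T)`) with compressibility constant `C`: there is a density `ρ`,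
weakly-* continuous in time, bounded between `C⁻¹` and `C`, solving the
continuity equation `∂ₜ ρ + div (ρ b) = 0`. -/
def NearlyIncompressibleWith (b : E2 → E2) (T : ℝ) (C : ℝ) : Prop :=
  0 < T ∧ 0 < C ∧ ∃ ρ : ℝ → E2 → ℝ,
    (∀ f : E2 → ℝ, Integrable f →
      ContinuousOn (fun t => ∫ x, ρ t x * f x) (Set.Ico 0 T)) ∧
    (∀ᵐ p : ℝ × E2, p.1 ∈ Set.Ioo 0 T → ρ p.1 p.2 ∈ Set.Icc C⁻¹ C) ∧
    SolvesContinuityEq b ρ (ENNReal.ofReal T)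

def NearlyIncompressible (b : E2 → E2) : Prop :=
  ∃ T C : ℝ, NearlyIncompressibleWith b T C

/-- `X` is a regular Lagrangian flow of the (autonomous) vector field `b`,
for all positive times: a.e. trajectory is an integral curve of `b` starting
at `x`, and the flow compresses Lebesgue measure by at most a constant `L`. -/
def IsRegLagFlow (b : E2 → E2) (X : ℝ → E2 → E2) : Prop :=
  (∀ᵐ x : E2, X 0 x = x ∧ ∀ t ∈ Set.Ici (0:ℝ),
      IntervalIntegrable (fun s => b (X s x)) volume 0 t ∧
      X t x = x + ∫ s in (0:ℝ)..t, b (X s x)) ∧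
  ∃ L : ℝ, 0 < L ∧ ∀ t ∈ Set.Ici (0:ℝ), AEMeasurable (X t) volume ∧
      Measure.map (X t) volume ≤ (ENNReal.ofReal L) • volume

/-- A scalar function has bounded variation on an open set `Ω ⊆ ℝ²`:
it is integrable on `Ω` and its distributional gradient has finite total mass,
i.e. the integrals `∫ u · div Φ` over smooth vector fields `Φ` compactly
supported in `Ω` with `‖Φ‖ ≤ 1` are bounded. -/
def BVOn (u : E2 → ℝ) (Ω : Set E2) : Prop :=
  IntegrableOn u Ω volume ∧
  ∃ M : ℝ, ∀ Φ : E2 → E2, ContDiff ℝ (⊤ : ℕ∞) Φ → HasCompactSupport Φ →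
    tsupport Φ ⊆ Ω → (∀ x, ‖Φ x‖ ≤ 1) →
    ∫ x in Ω, u x * divg Φ x ≤ M

/-- A vector-valued map has bounded variation on `Ω` if each component does. -/
def BVVecOn (u : E2 → E2) (Ω : Set E2) : Prop :=
  ∀ i : Fin 2, BVOn (fun x => u x i) Ω

/-- Total variation (mass of the distributional gradient) of a scalar
function on an open set `Ω ⊆ ℝ²`. -/
def totVarOn (u : E2 → ℝ) (Ω : Set E2) : ℝ≥0∞ :=
  ⨆ Φ : {Φ : E2 → E2 // ContDiff ℝ (⊤ : ℕ∞) Φ ∧ HasCompactSupport Φ ∧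
      tsupport Φ ⊆ Ω ∧ ∀ x, ‖Φ x‖ ≤ 1},
    ENNReal.ofReal (∫ x in Ω, u x * divg Φ.1 x)

/-- `D` is the weak (distributional) differential of `u : ℝ² → F` on the open
set `Ω`, in the sense of integration by parts against test functions. -/
def IsWeakDeriv {F : Type*} [NormedAddCommGroup F] [NormedSpace ℝ F]
    (u : E2 → F) (D : E2 → E2 →L[ℝ] F) (Ω : Set E2) : Prop :=
  ∀ φ : E2 → ℝ, ContDiff ℝ (⊤ : ℕ∞) φ → HasCompactSupport φ → tsupport φ ⊆ Ω →
    ∀ v : E2, ∫ x in Ω, fderiv ℝ φ x v • u x = - ∫ x in Ω, φ x • D x v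

/-- `u ∈ W^{1,p}(Ω; F)`: `u` and some weak differential of `u` are in `Lᵖ(Ω)`. -/
def SobolevOn {F : Type*} [NormedAddCommGroup F] [NormedSpace ℝ F]
    (p : ℝ) (u : E2 → F) (Ω : Set E2) : Prop :=
  MemLp u (ENNReal.ofReal p) (volume.restrict Ω) ∧
  ∃ D : E2 → E2 →L[ℝ] F, MemLp D (ENNReal.ofReal p) (volume.restrict Ω) ∧
    IsWeakDeriv u D Ω

/-- `μ` is the total variation measure `|Db|` of the (BV) vector field
`b : ℝ² → ℝ²`: a finite Borel measure whose value on every open set `U` is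
`sup { ∑ᵢ ∫_U bᵢ div Φᵢ }` over smooth test matrix fields of norm at most 1
compactly supported in `U`. -/
def IsTotalVariationMeasureOf (b : E2 → E2) (μ : Measure E2) : Prop :=
  IsFiniteMeasure μ ∧
  ∀ U : Set E2, IsOpen U →
    μ U = ⨆ Φ : {Φ : Fin 2 → E2 → E2 //
        (∀ i, ContDiff ℝ (⊤ : ℕ∞) (Φ i) ∧ HasCompactSupport (Φ i) ∧ tsupport (Φ i) ⊆ U) ∧
        ∀ x, (∑ i, ‖Φ i x‖ ^ 2) ≤ 1},
      ENNReal.ofReal (∑ i, ∫ x in U, b x i * divg (Φ.1 i) x)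

/-- `g'` is the weak derivative of `g : ℝ → ℝ`. -/
def IsWeakDerivR (g g' : ℝ → ℝ) : Prop :=
  ∀ φ : ℝ → ℝ, ContDiff ℝ (⊤ : ℕ∞) φ → HasCompactSupport φ →
    ∫ t, deriv φ t * g t = - ∫ t, φ t * g' t

/-- `g ∈ W^{1,p}_loc(ℝ)`. -/
def SobolevLocR (p : ℝ) (g : ℝ → ℝ) : Prop :=
  ∃ g' : ℝ → ℝ, IsWeakDerivR g g' ∧
    ∀ R : ℝ, 0 < R →
      MemLp g (ENNReal.ofReal p) (volume.restrict (Set.Ioo (-R) R)) ∧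
      MemLp g' (ENNReal.ofReal p) (volume.restrict (Set.Ioo (-R) R))

/-- `g ∈ BV_loc(ℝ)`. -/
def BVLocR (g : ℝ → ℝ) : Prop :=
  ∀ R : ℝ, 0 < R → BoundedVariationOn g (Set.Icc (-R) R)

/-- The rotated gradient `∇⊥H = (-∂₂ H, ∂₁ H)` of `H`, evaluated via `fderiv`. -/
def IsPerpGradAt (b : E2 → E2) (H : E2 → ℝ) (x : E2) : Prop :=
  b x 0 = - fderiv ℝ H x (EuclideanSpace.single 1 1) ∧
  b x 1 = fderiv ℝ H x (EuclideanSpace.single 0 1)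

end


noncomputable section


/-- monotone + differentiable at a point implies nonneg deriv -/
theorem my_mono_deriv_nonneg {f : ℝ → ℝ} (hm : Monotone f) {x : ℝ}
    (hd : DifferentiableAt ℝ f x) : 0 ≤ deriv f x := by
  have h := hd.hasDerivAt
  rw [hasDerivAt_iff_tendsto_slope] at h
  have h2 : Tendsto (slope f x) (𝓝[>] x) (𝓝 (deriv f x)) :=
    h.mono_left (nhdsWithin_mono x fun y hy => ne_of_gt hy)
  refine ge_of_tendsto h2 ?_
  filter_upwards [self_mem_nhdsWithin] with y hy
  have hxy : x ≤ y := le_of_lt hy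
  rw [slope_def_field]
  exact div_nonneg (by simp [sub_nonneg]; exact hm hxy) (by simp [sub_nonneg, hxy])

theorem my_expNegInvGlue_mono : Monotone expNegInvGlue := by
  intro x y h
  rcases le_or_gt x 0 with hx | hx
  · rw [expNegInvGlue.zero_of_nonpos hx]; exact expNegInvGlue.nonneg y
  · have hy : 0 < y := lt_of_lt_of_le hx h
    rw [show expNegInvGlue x = Real.exp (-x⁻¹) by simp [expNegInvGlue, not_le.2 hx],
        show expNegInvGlue y = Real.exp (-y⁻¹) by simp [expNegInvGlue, not_le.2 hy]]
    exact Real.exp_le_exp.2 (neg_le_neg (inv_anti₀ hx h))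

theorem my_smoothTransition_mono : Monotone Real.smoothTransition := by
  intro x y h
  unfold Real.smoothTransition
  rw [div_le_div_iff₀ (Real.smoothTransition.pos_denom x) (Real.smoothTransition.pos_denom y)]
  have h1 := my_expNegInvGlue_mono h
  have h2 := my_expNegInvGlue_mono (by linarith : 1 - y ≤ 1 - x)
  nlinarith [expNegInvGlue.nonneg x, expNegInvGlue.nonneg y,
    expNegInvGlue.nonneg (1 - x), expNegInvGlue.nonneg (1 - y)]

theorem my_smoothTransition_deriv_zero {x : ℝ} (hx : x ∉ Icc (0:ℝ) 1) :
    deriv Real.smoothTransition x = 0 := by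
  simp only [mem_Icc, not_and_or, not_le] at hx
  rcases hx with hx | hx
  · have : Real.smoothTransition =ᶠ[𝓝 x] (fun _ => (0:ℝ)) := by
      filter_upwards [Iio_mem_nhds hx] with y hy
      exact Real.smoothTransition.zero_of_nonpos (le_of_lt hy)
    rw [this.deriv_eq, deriv_const]
  · have : Real.smoothTransition =ᶠ[𝓝 x] (fun _ => (1:ℝ)) := by
      filter_upwards [Ioi_mem_nhds hx] with y hy
      exact Real.smoothTransition.one_of_one_le (le_of_lt hy)
    rw [this.deriv_eq, deriv_const]

theorem my_smoothTransition_lipschitz : ∃ C : ℝ≥0, LipschitzWith C Real.smoothTransition := by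
  have hdiff : Differentiable ℝ Real.smoothTransition :=
    (Real.smoothTransition.contDiff (n := (⊤ : ℕ∞))).differentiable (by simp)
  have hcont : Continuous (deriv Real.smoothTransition) :=
    (Real.smoothTransition.contDiff (n := (⊤:ℕ∞))).continuous_deriv (by exact_mod_cast le_top)
  have hcs : HasCompactSupport (deriv Real.smoothTransition) :=
    HasCompactSupport.intro isCompact_Icc fun x hx => my_smoothTransition_deriv_zero hx
  obtain ⟨C, hC⟩ := (hcont.norm).bounded_above_of_compact_support hcs.norm
  refine ⟨Real.toNNReal C, lipschitzWith_of_nnnorm_deriv_le hdiff fun x => ?_⟩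
  have h2 : ‖deriv Real.smoothTransition x‖ ≤ max C 0 :=
    le_trans (by simpa using hC x) (le_max_left _ _)
  rw [← NNReal.coe_le_coe, coe_nnnorm, Real.coe_toNNReal']
  exact h2

/-- divergence vanishes off the support -/
theorem my_divg_zero {Φ : E2 → E2} {x : E2} (hx : x ∉ tsupport Φ) :
    (∑ i, fderiv ℝ Φ x (EuclideanSpace.single i 1) i) = 0 := by
  have h0 : Φ =ᶠ[𝓝 x] (fun _ => (0:E2)) := by
    filter_upwards [(isClosed_tsupport Φ).isOpen_compl.mem_nhds hx] with y hy
    exact image_eq_zero_of_notMem_tsupport hy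
  rw [show fderiv ℝ Φ x = 0 from by rw [h0.fderiv_eq]; exact fderiv_const_apply 0]
  simp

theorem my_fderiv_coord (Φ : E2 → E2) (hΦ : ContDiff ℝ (⊤ : ℕ∞) Φ) (i : Fin 2) (x v : E2) :
    fderiv ℝ (fun y => Φ y i) x v = fderiv ℝ Φ x v i := by
  have h : (fun y => Φ y i) = (EuclideanSpace.proj (𝕜 := ℝ) i) ∘ Φ := rfl
  rw [h]
  rw [((EuclideanSpace.proj (𝕜 := ℝ) i).hasFDerivAt.comp x
    (hΦ.differentiable (by simp) x).hasFDerivAt).fderiv]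
  rfl

theorem my_decomp (w : E2) (L : E2 →L[ℝ] ℝ) :
    ∑ i, L (EuclideanSpace.single i 1) * w i = L w := by
  have hw : w = ∑ i, w i • EuclideanSpace.single i 1 := by
    apply PiLp.ext; intro j
    fin_cases j <;> simp [EuclideanSpace.single_apply]
  conv_rhs => rw [hw]
  rw [map_sum]
  refine Finset.sum_congr rfl fun i _ => ?_
  rw [L.map_smul]
  simp [mul_comm]

/-! ### smooth approximations of step functions -/

def thetaFam (s : ℝ) (n : ℕ) : ℝ → ℝ := fun h => Real.smoothTransition ((h - s) * (n+1) + 1)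

theorem thetaFam_contDiff (s : ℝ) (n : ℕ) : ContDiff ℝ ((⊤:ℕ∞) : WithTop ℕ∞) (thetaFam s n) := by
  have : thetaFam s n = Real.smoothTransition ∘ (fun h => (h - s) * (n+1) + 1) := rfl
  rw [this]
  exact (Real.smoothTransition.contDiff (n := (⊤:ℕ∞))).comp
    ((contDiff_id.sub contDiff_const).mul contDiff_const |>.add contDiff_const)

theorem thetaFam_mono (s : ℝ) (n : ℕ) : Monotone (thetaFam s n) := by
  intro x y h
  exact my_smoothTransition_mono (by nlinarith [Nat.cast_nonneg (α := ℝ) n])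

theorem thetaFam_lipschitz (s : ℝ) (n : ℕ) : ∃ C : ℝ≥0, LipschitzWith C (thetaFam s n) := by
  obtain ⟨C, hC⟩ := my_smoothTransition_lipschitz
  refine ⟨C * (n+1 : ℝ≥0), hC.comp (LipschitzWith.of_dist_le_mul fun x y => ?_)⟩
  rw [Real.dist_eq, Real.dist_eq]
  have : (x - s) * (n+1) + 1 - ((y - s) * (n+1) + 1) = (x - y) * (n+1) := by ring
  rw [this, abs_mul, abs_of_nonneg (by positivity : (0:ℝ) ≤ (n:ℝ)+1)]
  push_cast
  ring_nf
  rfl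

theorem thetaFam_diff (s : ℝ) (n : ℕ) : Differentiable ℝ (thetaFam s n) :=
  (thetaFam_contDiff s n).differentiable (by simp)

theorem thetaFam_deriv_nonneg (s : ℝ) (n : ℕ) (h : ℝ) : 0 ≤ deriv (thetaFam s n) h :=
  my_mono_deriv_nonneg (thetaFam_mono s n) ((thetaFam_diff s n) h)

theorem thetaFam_nonneg (s : ℝ) (n : ℕ) (h : ℝ) : 0 ≤ thetaFam s n h :=
  Real.smoothTransition.nonneg _

theorem thetaFam_le_one (s : ℝ) (n : ℕ) (h : ℝ) : thetaFam s n h ≤ 1 :=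
  Real.smoothTransition.le_one _

theorem thetaFam_eq_zero (s : ℝ) (n : ℕ) {h : ℝ} (hh : h ≤ s - 1/(n+1)) :
    thetaFam s n h = 0 := by
  apply Real.smoothTransition.zero_of_nonpos
  have hn : (0:ℝ) < (n:ℝ) + 1 := by positivity
  have h2 : h - s ≤ -(1/(n+1)) := by linarith
  have h3 : (h - s) * (n+1) ≤ -(1/(n+1)) * (n+1) := by nlinarith
  have h4 : -(1/((n:ℝ)+1)) * (n+1) = -1 := by field_simp
  linarith

theorem thetaFam_eq_one (s : ℝ) (n : ℕ) {h : ℝ} (hh : s ≤ h) : thetaFam s n h = 1 := by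
  apply Real.smoothTransition.one_of_one_le
  nlinarith [Nat.cast_nonneg (α := ℝ) n]

theorem thetaFam_deriv_zero (s : ℝ) (n : ℕ) {h : ℝ}
    (hh : h ∉ Icc (s - 1/(n+1)) s) : deriv (thetaFam s n) h = 0 := by
  simp only [mem_Icc, not_and_or, not_le] at hh
  rcases hh with hh | hh
  · have : thetaFam s n =ᶠ[𝓝 h] (fun _ => (0:ℝ)) := by
      filter_upwards [Iio_mem_nhds hh] with y hy
      exact thetaFam_eq_zero s n (le_of_lt hy)
    rw [this.deriv_eq, deriv_const]
  · have : thetaFam s n =ᶠ[𝓝 h] (fun _ => (1:ℝ)) := by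
      filter_upwards [Ioi_mem_nhds hh] with y hy
      exact thetaFam_eq_one s n (le_of_lt hy)
    rw [this.deriv_eq, deriv_const]

theorem thetaFam_lintegral (s : ℝ) (n : ℕ) :
    ∫⁻ h, ENNReal.ofReal (deriv (thetaFam s n) h) ≤ 1 := by
  set a := s - 1/(n+1) with ha
  have has : a ≤ s := by
    rw [ha]
    have : (0:ℝ) < 1/((n:ℝ)+1) := by positivity
    linarith
  have hcont : Continuous (deriv (thetaFam s n)) :=
    (thetaFam_contDiff s n).continuous_deriv (by exact_mod_cast le_top)
  have hzero : ∀ h ∉ Icc a s, ENNReal.ofReal (deriv (thetaFam s n) h) = 0 := by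
    intro h hh; rw [thetaFam_deriv_zero s n hh]; simp
  have hind : (fun h => ENNReal.ofReal (deriv (thetaFam s n) h))
      = (Icc a s).indicator (fun h => ENNReal.ofReal (deriv (thetaFam s n) h)) := by
    ext h
    by_cases hh : h ∈ Icc a s
    · rw [indicator_of_mem hh]
    · rw [indicator_of_notMem hh, hzero h hh]
  rw [hind, lintegral_indicator measurableSet_Icc]
  have hint : IntegrableOn (deriv (thetaFam s n)) (Icc a s) volume :=
    hcont.continuousOn.integrableOn_compact isCompact_Icc
  rw [← ofReal_integral_eq_lintegral_ofReal hint
    (Filter.Eventually.of_forall fun h => thetaFam_deriv_nonneg s n h)]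
  have : ∫ h in Icc a s, deriv (thetaFam s n) h = ∫ h in a..s, deriv (thetaFam s n) h := by
    rw [intervalIntegral.integral_of_le has, integral_Icc_eq_integral_Ioc]
  rw [this, intervalIntegral.integral_deriv_eq_sub
    (fun x _ => (thetaFam_diff s n) x) (hcont.intervalIntegrable a s)]
  have h1 : thetaFam s n s = 1 := thetaFam_eq_one s n le_rfl
  have h0 : thetaFam s n a = 0 := thetaFam_eq_zero s n le_rfl
  rw [h1, h0]
  simp

theorem thetaFam_tendsto (s h : ℝ) :
    Tendsto (fun n => thetaFam s n h) atTop (𝓝 (if s ≤ h then (1:ℝ) else 0)) := by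
  by_cases hh : s ≤ h
  · simp only [hh, if_true]
    have : ∀ n, thetaFam s n h = 1 := fun n => thetaFam_eq_one s n hh
    simp only [this]; exact tendsto_const_nhds
  · simp only [hh, if_false]
    push_neg at hh
    apply tendsto_const_nhds.congr'
    obtain ⟨N, hN⟩ := exists_nat_gt (1 / (s - h))
    rw [Filter.EventuallyEq, eventually_atTop]
    refine ⟨N, fun n hn => ?_⟩
    refine (thetaFam_eq_zero s n ?_).symm
    have hsh : 0 < s - h := by linarith
    have hN' : 1 / (s - h) < (n:ℝ) + 1 := by
      calc 1 / (s - h) < N := hN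
      _ ≤ (n:ℝ) := by exact_mod_cast hn
      _ ≤ n + 1 := by linarith
    have : 1 / ((n:ℝ)+1) < s - h := by
      rw [div_lt_iff₀ (by positivity)]
      rw [div_lt_iff₀ hsh] at hN'
      linarith
    linarith

end


noncomputable section

/-- Core estimate: integrating a smooth monotone composition against a divergence. -/
theorem key_smooth
    (Ω' : Set E2) (hop : IsOpen Ω') (hfin : volume Ω' ≠ ⊤)
    (H : E2 → ℝ) (hHmeas : Measurable H)
    (H' : E2 → ℝ) (K : ℝ≥0) (hH'lip : LipschitzWith K H') (hHeq : EqOn H H' Ω')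
    (A : ℝ) (hA0 : 0 ≤ A) (hA : ∀ᵐ z : E2, z ∈ Ω' → ‖fderiv ℝ H z‖ ≤ A)
    (ρ : ℝ → ℝ) (hρmeas : Measurable ρ)
    (B : ℝ) (hB0 : 0 ≤ B) (hB : ∀ᵐ h : ℝ, ρ h ≤ B)
    (hpush : Measure.map H (volume.restrict Ω')
      = volume.withDensity (fun h => ENNReal.ofReal (ρ h)))
    (θ : ℝ → ℝ) (hθd : Differentiable ℝ θ) (hθc : Continuous (deriv θ))
    (Lθ : ℝ≥0) (hθlip : LipschitzWith Lθ θ)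
    (hθ0 : ∀ h, 0 ≤ deriv θ h)
    (hθint : ∫⁻ h, ENNReal.ofReal (deriv θ h) ≤ 1)
    (Φ : E2 → E2) (hΦ : ContDiff ℝ (⊤ : ℕ∞) Φ) (hΦc : HasCompactSupport Φ)
    (hΦs : tsupport Φ ⊆ Ω') (hΦ1 : ∀ x, ‖Φ x‖ ≤ 1) :
    |∫ x in Ω', θ (H x) * (∑ i, fderiv ℝ Φ x (EuclideanSpace.single i 1) i)| ≤ A * B := by
  have hfinr : IsFiniteMeasure (volume.restrict Ω') :=
    ⟨by rwa [Measure.restrict_apply_univ, lt_top_iff_ne_top]⟩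
  set e : Fin 2 → E2 := fun i => EuclideanSpace.single i 1 with he
  set u : E2 → ℝ := fun x => θ (H' x) with hu
  have hulip : LipschitzWith (Lθ * K) u := hθlip.comp hH'lip
  set Φc : Fin 2 → E2 → ℝ := fun i x => Φ x i with hΦcdef
  have hΦdiff : Differentiable ℝ Φ := hΦ.differentiable (by simp)
  have hΦcd : ∀ i, ContDiff ℝ (⊤ : ℕ∞) (Φc i) := fun i =>
    ((EuclideanSpace.proj (𝕜 := ℝ) i).contDiff (n := (⊤ : ℕ∞))).comp hΦ
  have hΦcdiff : ∀ i, Differentiable ℝ (Φc i) := fun i =>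
    (hΦcd i).differentiable (by simp)
  have hΦcc : ∀ i, HasCompactSupport (Φc i) := fun i =>
    hΦc.comp_left (g := fun w : E2 => w i) rfl
  have hΦclip : ∀ i, ∃ C : ℝ≥0, LipschitzWith C (Φc i) := fun i =>
    ContDiff.lipschitzWith_of_hasCompactSupport (hΦcc i) (hΦcd i)
      (by simp)
  -- divergence as sum of coordinate partials
  have hdivco : ∀ x, (∑ i, fderiv ℝ Φ x (e i) i) = ∑ i, fderiv ℝ (Φc i) x (e i) := by
    intro x
    refine Finset.sum_congr rfl fun i _ => ?_
    rw [my_fderiv_coord Φ hΦ i x (e i)]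
  -- partial derivatives: continuity, compact support, integrability
  have hfdercont : ∀ i, Continuous fun x => fderiv ℝ (Φc i) x (e i) := fun i =>
    ((hΦcd i).continuous_fderiv (by simp)).clm_apply continuous_const
  have hfdercs : ∀ i, HasCompactSupport fun x => fderiv ℝ (Φc i) x (e i) := fun i =>
    ((hΦcc i).fderiv (𝕜 := ℝ)).comp_left (g := fun L : E2 →L[ℝ] ℝ => L (e i)) rfl
  have huint : ∀ i, Integrable (fun x => u x * fderiv ℝ (Φc i) x (e i)) volume := fun i =>
    (hulip.continuous.mul (hfdercont i)).integrable_of_hasCompactSupport ((hfdercs i).mul_left)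
  -- lineDeriv u integrands
  have hldmeas : ∀ i, AEStronglyMeasurable (fun x => lineDeriv ℝ u x (e i)) volume := fun i =>
    aestronglyMeasurable_lineDeriv hulip.continuous volume
  have hldint : ∀ i, Integrable (fun x => lineDeriv ℝ u x (e i) * Φc i x) volume := by
    intro i
    refine Integrable.bdd_mul (c := (Lθ * K : ℝ≥0) * ‖e i‖) ?_ (hldmeas i) ?_
    · exact ((hΦcd i).continuous).integrable_of_hasCompactSupport (hΦcc i)
    · exact Filter.Eventually.of_forall fun x => norm_lineDeriv_le_of_lipschitz ℝ hulip
  -- Step 1: reduce to a full-space integral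
  have hstep1 : ∫ x in Ω', θ (H x) * (∑ i, fderiv ℝ Φ x (e i) i)
      = ∫ x, u x * (∑ i, fderiv ℝ Φ x (e i) i) := by
    have h0 : ∫ x in Ω', θ (H x) * (∑ i, fderiv ℝ Φ x (e i) i)
        = ∫ x in Ω', u x * (∑ i, fderiv ℝ Φ x (e i) i) :=
      setIntegral_congr_fun hop.measurableSet
        (fun x hx => by simp only [hu]; rw [hHeq hx])
    rw [h0]
    exact setIntegral_eq_integral_of_forall_compl_eq_zero fun x hx => by
      rw [my_divg_zero (fun h => hx (hΦs h)), mul_zero]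
  -- Step 2: expand the divergence and integrate by parts
  have hstep2 : ∫ x, u x * (∑ i, fderiv ℝ Φ x (e i) i)
      = ∑ i, ∫ x, u x * fderiv ℝ (Φc i) x (e i) := by
    have : ∀ x, u x * (∑ i, fderiv ℝ Φ x (e i) i)
        = ∑ i, u x * fderiv ℝ (Φc i) x (e i) := fun x => by
      rw [hdivco x, Finset.mul_sum]
    simp only [this]
    exact integral_finset_sum _ fun i _ => huint i
  have hibp : ∀ i, ∫ x, u x * fderiv ℝ (Φc i) x (e i)
      = - ∫ x, lineDeriv ℝ u x (e i) * Φc i x := by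
    intro i
    obtain ⟨Ci, hCi⟩ := hΦclip i
    have h1 := hulip.integral_lineDeriv_mul_eq (μ := volume) hCi (hΦcc i) (e i)
    have h2 : ∀ x, lineDeriv ℝ (Φc i) x (-(e i)) = -(fderiv ℝ (Φc i) x (e i)) := fun x => by
      rw [((hΦcdiff i) x).lineDeriv_eq_fderiv, map_neg]
    simp only [h2] at h1
    rw [h1, ← integral_neg]
    congr 1; ext x; ring
  have hstep3 : ∫ x in Ω', θ (H x) * (∑ i, fderiv ℝ Φ x (e i) i)
      = - ∫ x, ∑ i, lineDeriv ℝ u x (e i) * Φc i x := by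
    rw [hstep1, hstep2]
    simp only [hibp]
    rw [Finset.sum_neg_distrib, ← integral_finset_sum _ fun i _ => hldint i]
  -- Step 4: pointwise bound
  set G : E2 → ℝ := fun x => ∑ i, lineDeriv ℝ u x (e i) * Φc i x with hG
  have hGint : Integrable G volume := integrable_finset_sum _ fun i _ => hldint i
  have hθb : ∀ h, deriv θ h ≤ (Lθ:ℝ) := by
    intro h
    have h1 : ‖lineDeriv ℝ θ h 1‖ ≤ (Lθ:ℝ) * ‖(1:ℝ)‖ := norm_lineDeriv_le_of_lipschitz ℝ hθlip
    rw [(hθd h).lineDeriv_eq_fderiv, fderiv_apply_one_eq_deriv] at h1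
    simpa using le_trans (le_abs_self _) h1
  have hGbound : ∀ᵐ x, ‖G x‖ ≤ Ω'.indicator (fun x => A * deriv θ (H x)) x := by
    filter_upwards [hH'lip.ae_differentiableAt (μ := volume), hA] with x hdx hax
    by_cases hx : x ∈ Ω'
    · have hder : HasFDerivAt u ((deriv θ (H' x)) • fderiv ℝ H' x) x :=
        (hθd (H' x)).hasDerivAt.comp_hasFDerivAt x hdx.hasFDerivAt
      have hline : ∀ v, lineDeriv ℝ u x v = deriv θ (H' x) * fderiv ℝ H' x v := fun v => by
        rw [hder.differentiableAt.lineDeriv_eq_fderiv, hder.fderiv]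
        simp
      have hGx : G x = deriv θ (H' x) * fderiv ℝ H' x (Φ x) := by
        rw [hG]
        simp only [hline]
        rw [← my_decomp (Φ x) (fderiv ℝ H' x), Finset.mul_sum]
        exact Finset.sum_congr rfl fun i _ => by ring
      have hfeq : fderiv ℝ H x = fderiv ℝ H' x :=
        (Filter.eventuallyEq_of_mem (hop.mem_nhds hx) hHeq).fderiv_eq
      have hnle : ‖fderiv ℝ H' x‖ ≤ A := by rw [← hfeq]; exact hax hx
      have hd0 : 0 ≤ deriv θ (H' x) := hθ0 _
      rw [indicator_of_mem hx, hGx]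
      rw [Real.norm_eq_abs, abs_mul, abs_of_nonneg hd0]
      have h1 : |fderiv ℝ H' x (Φ x)| ≤ A := by
        calc |fderiv ℝ H' x (Φ x)| ≤ ‖fderiv ℝ H' x‖ * ‖Φ x‖ :=
              (fderiv ℝ H' x).le_opNorm (Φ x)
          _ ≤ A * 1 := mul_le_mul hnle (hΦ1 x) (norm_nonneg _) hA0
          _ = A := mul_one A
      rw [hHeq hx]
      calc deriv θ (H' x) * |fderiv ℝ H' x (Φ x)| ≤ deriv θ (H' x) * A :=
            mul_le_mul_of_nonneg_left h1 hd0
        _ = A * deriv θ (H' x) := mul_comm _ _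
    · have hΦ0 : Φ x = 0 := image_eq_zero_of_notMem_tsupport (fun h => hx (hΦs h))
      have : G x = 0 := by
        rw [hG]
        refine Finset.sum_eq_zero fun i _ => ?_
        have : Φc i x = 0 := by rw [hΦcdef]; simp only [hΦ0]; rfl
        rw [this, mul_zero]
      rw [this, indicator_of_notMem hx]
      simp
  have hmeasθH : AEStronglyMeasurable (fun x => A * deriv θ (H x)) (volume.restrict Ω') :=
    (((hθc.measurable.comp hHmeas).const_mul A)).aestronglyMeasurable
  have hintθH : IntegrableOn (fun x => A * deriv θ (H x)) Ω' volume := by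
    refine (integrable_const (A * (Lθ:ℝ))).mono' hmeasθH ?_
    refine Filter.Eventually.of_forall fun x => ?_
    rw [Real.norm_eq_abs, abs_mul, abs_of_nonneg hA0, abs_of_nonneg (hθ0 _)]
    exact mul_le_mul_of_nonneg_left (hθb _) hA0
  have hindint : Integrable (Ω'.indicator fun x => A * deriv θ (H x)) volume := by
    rw [integrable_indicator_iff hop.measurableSet]; exact hintθH
  -- Step 5: the pushforward estimate
  have hIB : ∫ x in Ω', deriv θ (H x) ≤ B := by
    have hint' : IntegrableOn (fun x => deriv θ (H x)) Ω' volume := by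
      refine (integrable_const ((Lθ:ℝ))).mono'
        ((hθc.measurable.comp hHmeas)).aestronglyMeasurable ?_
      exact Filter.Eventually.of_forall fun x => by
        rw [Real.norm_eq_abs, abs_of_nonneg (hθ0 _)]; exact hθb _
    have h1 : ENNReal.ofReal (∫ x in Ω', deriv θ (H x))
        = ∫⁻ x in Ω', ENNReal.ofReal (deriv θ (H x)) :=
      ofReal_integral_eq_lintegral_ofReal hint'
        (Filter.Eventually.of_forall fun x => hθ0 _)
    have h2 : ∫⁻ x in Ω', ENNReal.ofReal (deriv θ (H x))
        = ∫⁻ h, ENNReal.ofReal (deriv θ h) ∂(Measure.map H (volume.restrict Ω')) :=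
      (lintegral_map (hθc.measurable.ennreal_ofReal) hHmeas).symm
    rw [hpush, lintegral_withDensity_eq_lintegral_mul volume
      (hρmeas.ennreal_ofReal)
      (hθc.measurable.ennreal_ofReal)] at h2
    have h3 : ∫⁻ h, ((fun h => ENNReal.ofReal (ρ h)) * fun h => ENNReal.ofReal (deriv θ h)) h
        ≤ ENNReal.ofReal B * ∫⁻ h, ENNReal.ofReal (deriv θ h) := by
      rw [← lintegral_const_mul _ (hθc.measurable.ennreal_ofReal)]
      refine lintegral_mono_ae ?_
      filter_upwards [hB] with h hb
      exact mul_le_mul_left (ENNReal.ofReal_le_ofReal hb) _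
    have h4 : ENNReal.ofReal (∫ x in Ω', deriv θ (H x)) ≤ ENNReal.ofReal B := by
      rw [h1, h2]
      refine le_trans h3 ?_
      calc ENNReal.ofReal B * ∫⁻ h, ENNReal.ofReal (deriv θ h)
          ≤ ENNReal.ofReal B * 1 := mul_le_mul_right hθint _
        _ = ENNReal.ofReal B := mul_one _
    rcases le_or_gt (∫ x in Ω', deriv θ (H x)) 0 with hI0 | hI0
    · linarith
    · exact (ENNReal.ofReal_le_ofReal_iff hB0).mp h4
  -- Final assembly
  rw [hstep3, abs_neg]
  calc |∫ x, G x| ≤ ∫ x, ‖G x‖ := by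
        rw [← Real.norm_eq_abs]; exact norm_integral_le_integral_norm G
    _ ≤ ∫ x, Ω'.indicator (fun x => A * deriv θ (H x)) x :=
        integral_mono_ae hGint.norm hindint hGbound
    _ = ∫ x in Ω', A * deriv θ (H x) := integral_indicator hop.measurableSet
    _ = A * ∫ x in Ω', deriv θ (H x) := integral_const_mul A _
    _ ≤ A * B := mul_le_mul_of_nonneg_left hIB hA0

end


/-- The divergence of a test field is continuous. -/
theorem my_divg_cont (Φ : E2 → E2) (hΦ : ContDiff ℝ (⊤ : ℕ∞) Φ) :
    Continuous (fun x => ∑ i, fderiv ℝ Φ x (EuclideanSpace.single i 1) i) := by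
  refine continuous_finset_sum _ fun i _ => ?_
  exact (EuclideanSpace.proj (𝕜 := ℝ) i).continuous.comp
    ((hΦ.continuous_fderiv (by simp)).clm_apply continuous_const)

/-- Indicator version of the core estimate. -/
theorem key_indicator
    (Ω' : Set E2) (hop : IsOpen Ω') (hfin : volume Ω' ≠ ⊤)
    (H : E2 → ℝ) (hHmeas : Measurable H)
    (H' : E2 → ℝ) (K : ℝ≥0) (hH'lip : LipschitzWith K H') (hHeq : EqOn H H' Ω')
    (A : ℝ) (hA0 : 0 ≤ A) (hA : ∀ᵐ z : E2, z ∈ Ω' → ‖fderiv ℝ H z‖ ≤ A)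
    (ρ : ℝ → ℝ) (hρmeas : Measurable ρ)
    (B : ℝ) (hB0 : 0 ≤ B) (hB : ∀ᵐ h : ℝ, ρ h ≤ B)
    (hpush : Measure.map H (volume.restrict Ω')
      = volume.withDensity (fun h => ENNReal.ofReal (ρ h)))
    (Φ : E2 → E2) (hΦ : ContDiff ℝ (⊤ : ℕ∞) Φ) (hΦc : HasCompactSupport Φ)
    (hΦs : tsupport Φ ⊆ Ω') (hΦ1 : ∀ x, ‖Φ x‖ ≤ 1) (s : ℝ) :
    |∫ x in Ω', (if s ≤ H x then (1:ℝ) else 0)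
      * (∑ i, fderiv ℝ Φ x (EuclideanSpace.single i 1) i)| ≤ A * B := by
  have hfinr : IsFiniteMeasure (volume.restrict Ω') :=
    ⟨by rwa [Measure.restrict_apply_univ, lt_top_iff_ne_top]⟩
  set D : E2 → ℝ := fun x => ∑ i, fderiv ℝ Φ x (EuclideanSpace.single i 1) i with hD
  have hDcont : Continuous D := my_divg_cont Φ hΦ
  have hDint : Integrable (fun x => |D x|) (volume.restrict Ω') := by
    have hDcs : HasCompactSupport D :=
      HasCompactSupport.intro hΦc (fun x hx => my_divg_zero hx)
    obtain ⟨Cd, hCd⟩ := hDcont.abs.bounded_above_of_compact_support hDcs.abs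
    refine (integrable_const Cd).mono' hDcont.abs.aestronglyMeasurable ?_
    exact Filter.Eventually.of_forall fun x => by
      rw [Real.norm_eq_abs, abs_abs]; exact le_trans (le_abs_self _) (by simpa using hCd x)
  have htend : Tendsto (fun n => ∫ x in Ω', thetaFam s n (H x) * D x) atTop
      (𝓝 (∫ x in Ω', (if s ≤ H x then (1:ℝ) else 0) * D x)) := by
    refine tendsto_integral_of_dominated_convergence (fun x => |D x|) ?_ hDint ?_ ?_
    · intro n
      exact (((thetaFam_contDiff s n).continuous.measurable.comp hHmeas).mul
        hDcont.measurable).aestronglyMeasurable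
    · intro n
      refine Filter.Eventually.of_forall fun x => ?_
      rw [Real.norm_eq_abs, abs_mul]
      calc |thetaFam s n (H x)| * |D x| ≤ 1 * |D x| := by
            refine mul_le_mul_of_nonneg_right ?_ (abs_nonneg _)
            rw [abs_of_nonneg (thetaFam_nonneg s n _)]
            exact thetaFam_le_one s n _
        _ = |D x| := one_mul _
    · refine Filter.Eventually.of_forall fun x => ?_
      exact (thetaFam_tendsto s (H x)).mul_const (D x)
  have hbd : ∀ n, |∫ x in Ω', thetaFam s n (H x) * D x| ≤ A * B := by
    intro n
    obtain ⟨Cn, hCn⟩ := thetaFam_lipschitz s n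
    exact key_smooth Ω' hop hfin H hHmeas H' K hH'lip hHeq A hA0 hA ρ hρmeas B hB0 hB hpush
      (thetaFam s n) (thetaFam_diff s n)
      ((thetaFam_contDiff s n).continuous_deriv (by exact_mod_cast le_top)) Cn hCn
      (thetaFam_deriv_nonneg s n) (thetaFam_lintegral s n) Φ hΦ hΦc hΦs hΦ1
  exact le_of_tendsto htend.abs (Filter.Eventually.of_forall hbd)


/-- Jordan-type decomposition of an integrable BV function via Stieltjes measures. -/
theorem bv_decomp (g : ℝ → ℝ) (hgBV : BoundedVariationOn g Set.univ) (hgL1 : Integrable g) :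
    ∃ (μp μq : Measure ℝ), IsFiniteMeasure μp ∧ IsFiniteMeasure μq ∧
      ∃ N : Set ℝ, N.Countable ∧
      (∀ h ∉ N, g h = (μp (Iic h)).toReal - (μq (Iic h)).toReal) ∧
      μp univ + μq univ ≤ eVariationOn g univ := by
  classical
  set T : ℝ := (eVariationOn g univ).toReal with hT
  have hT0 : 0 ≤ T := ENNReal.toReal_nonneg
  have hgl : LocallyBoundedVariationOn g univ := hgBV.locallyBoundedVariationOn
  set v : ℝ → ℝ := variationOnFromTo g univ 0 with hv
  have hvab : ∀ a b : ℝ, v b - v a = variationOnFromTo g univ a b := by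
    intro a b
    have h := variationOnFromTo.add hgl (mem_univ 0) (mem_univ a) (mem_univ b)
    simp only [← hv] at h
    linarith
  have hvarT : ∀ a b : ℝ, a ≤ b → variationOnFromTo g univ a b ≤ T := by
    intro a b hab
    rw [variationOnFromTo.eq_of_le g univ hab]
    exact ENNReal.toReal_mono hgBV (eVariationOn.mono g (subset_univ _))
  have hvincr : ∀ a b : ℝ, a ≤ b → |g b - g a| ≤ v b - v a := by
    intro a b hab
    rw [hvab a b, variationOnFromTo.eq_of_le g univ hab]
    have h1 : dist (g b) (g a) ≤ (eVariationOn g (univ ∩ Icc a b)).toReal :=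
      BoundedVariationOn.dist_le (hgBV.mono inter_subset_left)
        ⟨trivial, right_mem_Icc.2 hab⟩ ⟨trivial, left_mem_Icc.2 hab⟩
    rwa [Real.dist_eq] at h1
  set p : ℝ → ℝ := fun b => (v b + g b)/2 with hp
  set q : ℝ → ℝ := fun b => (v b - g b)/2 with hq
  have hpm : Monotone p := by
    intro a b hab
    have h1 := hvincr a b hab
    have h2 := abs_le.mp h1
    simp only [hp]
    linarith [h2.1]
  have hqm : Monotone q := by
    intro a b hab
    have h1 := hvincr a b hab
    have h2 := abs_le.mp h1
    simp only [hq]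
    linarith [h2.2]
  have hgb : ∀ b, |g b - g 0| ≤ T := by
    intro b
    have h1 : dist (g b) (g 0) ≤ T := BoundedVariationOn.dist_le hgBV trivial trivial
    rwa [Real.dist_eq] at h1
  have hvb : ∀ b, |v b| ≤ T := by
    intro b
    rcases le_total 0 b with hb | hb
    · rw [abs_of_nonneg (variationOnFromTo.nonneg_of_le g univ hb)]
      exact hvarT 0 b hb
    · rw [abs_of_nonpos (variationOnFromTo.nonpos_of_ge g univ hb)]
      have h := hvarT b 0 hb
      have h2 := variationOnFromTo.eq_neg_swap g univ b 0
      have h3 : -v b = variationOnFromTo g univ b 0 := by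
        simp only [hv]; rw [h2]
      rw [h3]
      exact h
  have hCp : ∀ b, |p b| ≤ T + (T + |g 0|) := by
    intro b
    have h1 := hvb b
    have h2 := hgb b
    have h3 : |g b| ≤ T + |g 0| := by
      calc |g b| ≤ |g b - g 0| + |g 0| := by
            have := abs_add_le (g b - g 0) (g 0); simpa using this
        _ ≤ T + |g 0| := by linarith
    have h4 := abs_le.mp h1
    have h5 := abs_le.mp h3
    rw [hp, abs_le]
    constructor <;> [skip; skip] <;> simp only [] <;> nlinarith
  have hCq : ∀ b, |q b| ≤ T + (T + |g 0|) := by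
    intro b
    have h4 := abs_le.mp (hvb b)
    have h3 : |g b| ≤ T + |g 0| := by
      calc |g b| ≤ |g b - g 0| + |g 0| := by
            have := abs_add_le (g b - g 0) (g 0); simpa using this
        _ ≤ T + |g 0| := by linarith [hgb b]
    have h5 := abs_le.mp h3
    rw [hq, abs_le]
    constructor <;> simp only [] <;> nlinarith
  set Cb : ℝ := T + (T + |g 0|) with hCb
  have hpbdd_below : BddBelow (range p) := ⟨-Cb, fun y ⟨b, hb⟩ => hb ▸ (abs_le.mp (hCp b)).1⟩
  have hpbdd_above : BddAbove (range p) := ⟨Cb, fun y ⟨b, hb⟩ => hb ▸ (abs_le.mp (hCp b)).2⟩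
  have hqbdd_below : BddBelow (range q) := ⟨-Cb, fun y ⟨b, hb⟩ => hb ▸ (abs_le.mp (hCq b)).1⟩
  have hqbdd_above : BddAbove (range q) := ⟨Cb, fun y ⟨b, hb⟩ => hb ▸ (abs_le.mp (hCq b)).2⟩
  set lp : ℝ := ⨅ b, p b with hlp
  set up : ℝ := ⨆ b, p b with hup
  set lq : ℝ := ⨅ b, q b with hlq
  set uq : ℝ := ⨆ b, q b with huq
  have hlpt : Tendsto p atBot (𝓝 lp) := tendsto_atBot_ciInf hpm hpbdd_below
  have hupt : Tendsto p atTop (𝓝 up) := tendsto_atTop_ciSup hpm hpbdd_above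
  have hlqt : Tendsto q atBot (𝓝 lq) := tendsto_atBot_ciInf hqm hqbdd_below
  have huqt : Tendsto q atTop (𝓝 uq) := tendsto_atTop_ciSup hqm hqbdd_above
  set P := hpm.stieltjesFunction with hP
  set Q := hqm.stieltjesFunction with hQ
  have hPsq : ∀ x, p x ≤ P x ∧ P x ≤ p (x+1) := fun x => by
    rw [hP, Monotone.stieltjesFunction_eq]
    exact ⟨hpm.le_rightLim le_rfl, hpm.rightLim_le (lt_add_one x)⟩
  have hQsq : ∀ x, q x ≤ Q x ∧ Q x ≤ q (x+1) := fun x => by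
    rw [hQ, Monotone.stieltjesFunction_eq]
    exact ⟨hqm.le_rightLim le_rfl, hqm.rightLim_le (lt_add_one x)⟩
  have hshift : Tendsto (fun x : ℝ => x + 1) atBot atBot := tendsto_atBot_add_const_right _ 1 tendsto_id
  have hshift' : Tendsto (fun x : ℝ => x + 1) atTop atTop := tendsto_atTop_add_const_right _ 1 tendsto_id
  have hPbot : Tendsto (P : ℝ → ℝ) atBot (𝓝 lp) :=
    tendsto_of_tendsto_of_tendsto_of_le_of_le hlpt (hlpt.comp hshift)
      (fun x => (hPsq x).1) (fun x => (hPsq x).2)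
  have hPtop : Tendsto (P : ℝ → ℝ) atTop (𝓝 up) :=
    tendsto_of_tendsto_of_tendsto_of_le_of_le hupt (hupt.comp hshift')
      (fun x => (hPsq x).1) (fun x => (hPsq x).2)
  have hQbot : Tendsto (Q : ℝ → ℝ) atBot (𝓝 lq) :=
    tendsto_of_tendsto_of_tendsto_of_le_of_le hlqt (hlqt.comp hshift)
      (fun x => (hQsq x).1) (fun x => (hQsq x).2)
  have hQtop : Tendsto (Q : ℝ → ℝ) atTop (𝓝 uq) :=
    tendsto_of_tendsto_of_tendsto_of_le_of_le huqt (huqt.comp hshift')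
      (fun x => (hQsq x).1) (fun x => (hQsq x).2)
  set N : Set ℝ := {x | ¬ContinuousAt p x} ∪ {x | ¬ContinuousAt q x} with hN
  have hNc : N.Countable := (hpm.countable_not_continuousAt).union (hqm.countable_not_continuousAt)
  have hPN : ∀ h ∉ N, P h = p h ∧ Q h = q h := by
    intro h hh
    simp only [hN, mem_union, mem_setOf_eq, not_or, not_not] at hh
    constructor
    · rw [hP, Monotone.stieltjesFunction_eq]
      exact rightLim_eq_of_tendsto
        (hh.1.tendsto.mono_left nhdsWithin_le_nhds)
    · rw [hQ, Monotone.stieltjesFunction_eq]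
      exact rightLim_eq_of_tendsto
        (hh.2.tendsto.mono_left nhdsWithin_le_nhds)
  have hgPQ : ∀ h ∉ N, g h = P h - Q h := by
    intro h hh
    obtain ⟨h1, h2⟩ := hPN h hh
    rw [h1, h2, hp, hq]
    ring
  -- the constant at -∞ vanishes
  have hc0 : lp - lq = 0 := by
    by_contra hc
    have hcpos : 0 < |lp - lq| := abs_pos.2 hc
    have htb : Tendsto (fun h => P h - Q h) atBot (𝓝 (lp - lq)) := hPbot.sub hQbot
    have hev : ∀ᶠ h in atBot, dist ((P h : ℝ) - Q h) (lp - lq) < |lp - lq|/2 :=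
      Metric.tendsto_nhds.mp htb (|lp - lq|/2) (by linarith)
    rw [eventually_atBot] at hev
    obtain ⟨M, hM⟩ := hev
    have hlow : ∀ h ∉ N, h ≤ M → |lp - lq|/2 ≤ |g h| := by
      intro h hh hhM
      rw [hgPQ h hh]
      have h1 := hM h hhM
      rw [Real.dist_eq] at h1
      have h3 : |lp - lq| - |(P h : ℝ) - Q h| ≤ |(lp - lq) - ((P h : ℝ) - Q h)| :=
        abs_sub_abs_le_abs_sub _ _
      have h4 : |(lp - lq) - ((P h : ℝ) - Q h)| = |((P h : ℝ) - Q h) - (lp - lq)| :=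
        abs_sub_comm _ _
      linarith
    have hNnull : volume N = 0 := hNc.measure_zero _
    have hae : ∀ᵐ h ∂(volume.restrict (Iic M)),
        ENNReal.ofReal (|lp - lq|/2) ≤ (‖g h‖₊ : ℝ≥0∞) := by
      have h1 : ∀ᵐ h ∂(volume.restrict (Iic M)), h ∉ N :=
        ae_restrict_of_ae ((ae_iff).2 (by simpa using hNnull))
      have h2 : ∀ᵐ h ∂(volume.restrict (Iic M)), h ∈ Iic M :=
        ae_restrict_mem measurableSet_Iic
      filter_upwards [h1, h2] with h hh hhM
      rw [← enorm_eq_nnnorm, Real.enorm_eq_ofReal_abs]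
      exact ENNReal.ofReal_le_ofReal (hlow h hh hhM)
    have hinf : (∫⁻ h, (‖g h‖₊ : ℝ≥0∞)) = ⊤ := by
      have h1 : ∫⁻ h in Iic M, ENNReal.ofReal (|lp - lq|/2) ≤ ∫⁻ h in Iic M, (‖g h‖₊ : ℝ≥0∞) :=
        lintegral_mono_ae hae
      rw [lintegral_const, Measure.restrict_apply_univ, Real.volume_Iic,
        ENNReal.mul_top (by simpa using (by linarith : (0:ℝ) < |lp - lq|/2))] at h1
      have h2 : ∫⁻ h in Iic M, (‖g h‖₊ : ℝ≥0∞) ≤ ∫⁻ h, (‖g h‖₊ : ℝ≥0∞) :=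
        setLIntegral_le_lintegral _ _
      exact top_le_iff.mp (le_trans h1 h2)
    have := hgL1.2
    rw [HasFiniteIntegral] at this; simp only [enorm_eq_nnnorm] at this; rw [hinf] at this
    exact absurd this (lt_irrefl _)
  -- measures
  refine ⟨P.measure, Q.measure, ⟨?_⟩, ⟨?_⟩, N, hNc, ?_, ?_⟩
  · rw [P.measure_univ hPbot hPtop]; exact ENNReal.ofReal_lt_top
  · rw [Q.measure_univ hQbot hQtop]; exact ENNReal.ofReal_lt_top
  · intro h hh
    have hPl : lp ≤ P h := le_trans (ciInf_le hpbdd_below h) (hPsq h).1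
    have hQl : lq ≤ Q h := le_trans (ciInf_le hqbdd_below h) (hQsq h).1
    rw [P.measure_Iic hPbot, Q.measure_Iic hQbot,
      ENNReal.toReal_ofReal (by linarith), ENNReal.toReal_ofReal (by linarith),
      hgPQ h hh]
    linarith
  · rw [P.measure_univ hPbot hPtop, Q.measure_univ hQbot hQtop]
    have hle : (up - lp) + (uq - lq) ≤ T := by
      have hRle : ∀ R : ℝ, 0 ≤ R → (p R - p (-R)) + (q R - q (-R)) ≤ T := by
        intro R hR
        have h1 : (p R - p (-R)) + (q R - q (-R)) = v R - v (-R) := by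
          simp only [hp, hq]; ring
        rw [h1, hvab (-R) R]
        exact hvarT (-R) R (by linarith)
      have htends : Tendsto (fun R : ℝ => (p R - p (-R)) + (q R - q (-R))) atTop
          (𝓝 ((up - lp) + (uq - lq))) := by
        refine Tendsto.add (Tendsto.sub hupt ?_) (Tendsto.sub huqt ?_)
        · exact hlpt.comp tendsto_neg_atTop_atBot
        · exact hlqt.comp tendsto_neg_atTop_atBot
      exact le_of_tendsto htends (eventually_atTop.2 ⟨0, fun R hR => hRle R hR⟩)
    have hup0 : 0 ≤ up - lp := by
      have := ciInf_le hpbdd_below (0:ℝ)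
      have := le_ciSup hpbdd_above (0:ℝ)
      linarith
    have huq0 : 0 ≤ uq - lq := by
      have := ciInf_le hqbdd_below (0:ℝ)
      have := le_ciSup hqbdd_above (0:ℝ)
      linarith
    calc ENNReal.ofReal (up - lp) + ENNReal.ofReal (uq - lq)
        = ENNReal.ofReal ((up - lp) + (uq - lq)) := (ENNReal.ofReal_add hup0 huq0).symm
      _ ≤ ENNReal.ofReal T := ENNReal.ofReal_le_ofReal hle
      _ = eVariationOn g univ := by rw [hT, ENNReal.ofReal_toReal hgBV]

/-- Corollary 2.4, BV composition estimate.
Let `Ω' ⊆ ℝ²` be a bounded open set, `H : Ω' → ℝ` Lipschitz with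
`‖∇H‖_{L^∞} ≤ A`, and assume `H_♯(ℒ²⌞Ω') = ρ ℒ¹` with `ρ ∈ L^∞`, `ρ ≤ B` a.e.
Then for every `g ∈ BV(ℝ) ∩ L¹(ℝ)` the composition `g ∘ H ∈ BV(Ω')` and
`Tot.Var._{Ω'}(g∘H) ≤ ‖∇H‖_{L^∞} ‖ρ‖_{L^∞} Tot.Var._ℝ(g)`. -/
theorem stmt8
    (Ω' : Set E2) (hop : IsOpen Ω') (hbd : Bornology.IsBounded Ω')
    (H : E2 → ℝ) (K : ℝ≥0) (hHLip : LipschitzOnWith K H Ω') (hHmeas : Measurable H)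
    (A : ℝ) (hA0 : 0 ≤ A) (hA : ∀ᵐ z : E2, z ∈ Ω' → ‖fderiv ℝ H z‖ ≤ A)
    (ρ : ℝ → ℝ) (hρmeas : Measurable ρ) (hρ0 : ∀ h, 0 ≤ ρ h)
    (B : ℝ) (hB0 : 0 ≤ B) (hB : ∀ᵐ h : ℝ, ρ h ≤ B)
    (hpush : Measure.map H (volume.restrict Ω')
      = volume.withDensity (fun h => ENNReal.ofReal (ρ h)))
    (g : ℝ → ℝ) (hgBV : BoundedVariationOn g Set.univ) (hgL1 : Integrable g) :
    BVOn (fun z => g (H z)) Ω' ∧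
    totVarOn (fun z => g (H z)) Ω'
      ≤ ENNReal.ofReal (A * B) * eVariationOn g Set.univ := by
  classical
  obtain ⟨H', hH'lip, hHeq⟩ := hHLip.extend_real
  have hfin : volume Ω' ≠ ⊤ := hbd.measure_lt_top.ne
  have hfinr : IsFiniteMeasure (volume.restrict Ω') :=
    ⟨by rwa [Measure.restrict_apply_univ, lt_top_iff_ne_top]⟩
  obtain ⟨μp, μq, hμpf, hμqf, N, hNc, hgN, hmass⟩ := bv_decomp g hgBV hgL1
  haveI := hμpf; haveI := hμqf
  set T : ℝ := (eVariationOn g Set.univ).toReal with hT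
  set fp : ℝ → ℝ := fun h => (μp (Iic h)).toReal with hfp
  set fq : ℝ → ℝ := fun h => (μq (Iic h)).toReal with hfq
  have hfpmono : Monotone fp := fun a b hab =>
    ENNReal.toReal_mono (measure_ne_top μp _) (measure_mono (Iic_subset_Iic.2 hab))
  have hfqmono : Monotone fq := fun a b hab =>
    ENNReal.toReal_mono (measure_ne_top μq _) (measure_mono (Iic_subset_Iic.2 hab))
  have hfpmeas : Measurable fp := hfpmono.measurable
  have hfqmeas : Measurable fq := hfqmono.measurable
  have hfpb : ∀ h, ‖fp h‖ ≤ (μp univ).toReal := fun h => by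
    rw [Real.norm_eq_abs, abs_of_nonneg ENNReal.toReal_nonneg]
    exact ENNReal.toReal_mono (measure_ne_top μp _) (measure_mono (subset_univ _))
  have hfqb : ∀ h, ‖fq h‖ ≤ (μq univ).toReal := fun h => by
    rw [Real.norm_eq_abs, abs_of_nonneg ENNReal.toReal_nonneg]
    exact ENNReal.toReal_mono (measure_ne_top μq _) (measure_mono (subset_univ _))
  set g' : ℝ → ℝ := fun h => fp h - fq h with hg'
  have hg'meas : Measurable g' := hfpmeas.sub hfqmeas
  have hg'eq : ∀ h ∉ N, g h = g' h := hgN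
  have hNmeas : MeasurableSet N := hNc.measurableSet
  have hNnull : volume N = 0 := hNc.measure_zero _
  have hHN : (volume.restrict Ω') (H ⁻¹' N) = 0 := by
    rw [← Measure.map_apply hHmeas hNmeas, hpush]
    exact (withDensity_absolutelyContinuous volume _) hNnull
  have hgae : (fun x => g (H x)) =ᵐ[volume.restrict Ω'] fun x => g' (H x) := by
    rw [Filter.EventuallyEq, ae_iff]
    refine measure_mono_null ?_ hHN
    intro x hx
    simp only [mem_setOf_eq] at hx
    by_contra hxN
    exact hx (hg'eq (H x) hxN)
  have hgaeR : g =ᵐ[volume] g' := by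
    rw [Filter.EventuallyEq, ae_iff]
    refine measure_mono_null ?_ hNnull
    intro h hh
    simp only [mem_setOf_eq] at hh
    by_contra hhN
    exact hh (hg'eq h hhN)
  -- integrability of the composition
  have hIntOn : IntegrableOn (fun z => g (H z)) Ω' volume := by
    constructor
    · exact ((hg'meas.comp hHmeas).aestronglyMeasurable).congr hgae.symm
    · rw [HasFiniteIntegral]; simp only [enorm_eq_nnnorm]
      have h1 : ∫⁻ x, (‖g (H x)‖₊ : ℝ≥0∞) ∂(volume.restrict Ω')
          = ∫⁻ x, (‖g' (H x)‖₊ : ℝ≥0∞) ∂(volume.restrict Ω') := by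
        refine lintegral_congr_ae ?_
        filter_upwards [hgae] with x hx
        rw [hx]
      have h2 : ∫⁻ x, (‖g' (H x)‖₊ : ℝ≥0∞) ∂(volume.restrict Ω')
          = ∫⁻ h, (‖g' h‖₊ : ℝ≥0∞) ∂(Measure.map H (volume.restrict Ω')) :=
        (lintegral_map (hg'meas.nnnorm.coe_nnreal_ennreal) hHmeas).symm
      rw [h1, h2, hpush, lintegral_withDensity_eq_lintegral_mul volume
        (hρmeas.ennreal_ofReal) (hg'meas.nnnorm.coe_nnreal_ennreal)]
      have h3 : ∫⁻ h, ((fun h => ENNReal.ofReal (ρ h)) * fun h => (‖g' h‖₊ : ℝ≥0∞)) h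
          ≤ ENNReal.ofReal B * ∫⁻ h, (‖g' h‖₊ : ℝ≥0∞) := by
        rw [← lintegral_const_mul _ (hg'meas.nnnorm.coe_nnreal_ennreal)]
        refine lintegral_mono_ae ?_
        filter_upwards [hB] with h hb
        exact mul_le_mul_left (ENNReal.ofReal_le_ofReal hb) _
      have h4 : ∫⁻ h, (‖g' h‖₊ : ℝ≥0∞) = ∫⁻ h, (‖g h‖₊ : ℝ≥0∞) := by
        refine lintegral_congr_ae ?_
        filter_upwards [hgaeR] with h hh
        rw [hh]
      refine lt_of_le_of_lt h3 ?_
      rw [h4]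
      exact ENNReal.mul_lt_top ENNReal.ofReal_lt_top hgL1.2
  -- the divergence is bounded and integrable on Ω'
  have hmassR : (μp univ).toReal + (μq univ).toReal ≤ T := by
    rw [← ENNReal.toReal_add (measure_ne_top μp _) (measure_ne_top μq _)]
    exact ENNReal.toReal_mono hgBV hmass
  -- the key estimate, for every admissible test field
  have key : ∀ Φ : E2 → E2, ContDiff ℝ (⊤ : ℕ∞) Φ → HasCompactSupport Φ →
      tsupport Φ ⊆ Ω' → (∀ x, ‖Φ x‖ ≤ 1) →
      |∫ x in Ω', g (H x) * divg Φ x| ≤ (A * B) * T := by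
    intro Φ hΦ hΦc hΦs hΦ1
    have hDdef : ∀ x, divg Φ x = ∑ i, fderiv ℝ Φ x (EuclideanSpace.single i 1) i := fun x => rfl
    set D : E2 → ℝ := fun x => divg Φ x with hD
    have hDcont : Continuous D := my_divg_cont Φ hΦ
    have hDcs : HasCompactSupport D :=
      HasCompactSupport.intro hΦc (fun x hx => my_divg_zero hx)
    obtain ⟨Cd, hCd⟩ := hDcont.norm.bounded_above_of_compact_support hDcs.norm
    have hDint : Integrable D (volume.restrict Ω') := by
      refine (integrable_const Cd).mono' hDcont.aestronglyMeasurable ?_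
      exact Filter.Eventually.of_forall fun x => by simpa using hCd x
    -- step 1: replace g by g'
    have hS1 : ∫ x in Ω', g (H x) * D x = ∫ x in Ω', g' (H x) * D x :=
      integral_congr_ae (hgae.mul Filter.EventuallyEq.rfl)
    -- step 2: split into the two monotone parts
    have hfpint : Integrable (fun x => fp (H x) * D x) (volume.restrict Ω') :=
      hDint.bdd_mul ((hfpmeas.comp hHmeas).aestronglyMeasurable)
        (Filter.Eventually.of_forall fun x => hfpb _)
    have hfqint : Integrable (fun x => fq (H x) * D x) (volume.restrict Ω') :=
      hDint.bdd_mul ((hfqmeas.comp hHmeas).aestronglyMeasurable)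
        (Filter.Eventually.of_forall fun x => hfqb _)
    have hS2 : ∫ x in Ω', g' (H x) * D x
        = (∫ x in Ω', fp (H x) * D x) - ∫ x in Ω', fq (H x) * D x := by
      rw [← integral_sub hfpint hfqint]
      refine integral_congr_ae (Filter.Eventually.of_forall fun x => ?_)
      simp only [hg']
      ring
    -- Fubini for a finite measure
    have hfub : ∀ μ : Measure ℝ, IsFiniteMeasure μ →
        ∫ x in Ω', (μ (Iic (H x))).toReal * D x
          = ∫ s, (∫ x in Ω', (if s ≤ H x then (1:ℝ) else 0) * D x) ∂μ := by
      intro μ hμ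
      have hrep : ∀ x, (μ (Iic (H x))).toReal
          = ∫ s, (if s ≤ H x then (1:ℝ) else 0) ∂μ := by
        intro x
        have h1 : ∫ s, (Iic (H x)).indicator (fun _ => (1:ℝ)) s ∂μ
            = (μ (Iic (H x))).toReal • (1:ℝ) := integral_indicator_const (1:ℝ) measurableSet_Iic
        rw [smul_eq_mul, mul_one] at h1
        rw [← h1]
        refine integral_congr_ae (Filter.Eventually.of_forall fun s => ?_)
        by_cases hs : s ≤ H x <;> simp [Set.indicator_apply, mem_Iic, hs]
      have hswap : ∫ x in Ω', (∫ s, (if s ≤ H x then (1:ℝ) else 0) * D x ∂μ)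
          = ∫ s, (∫ x in Ω', (if s ≤ H x then (1:ℝ) else 0) * D x) ∂μ := by
        refine integral_integral_swap ?_
        set S : Set (E2 × ℝ) := {p | p.2 ≤ H p.1} with hS
        have hSmeas : MeasurableSet S := measurableSet_le measurable_snd (hHmeas.comp measurable_fst)
        have heq : (Function.uncurry fun x s => (if s ≤ H x then (1:ℝ) else 0) * D x)
            = S.indicator (fun p => D p.1) := by
          funext p
          rw [Set.indicator_apply]
          by_cases hp : p.2 ≤ H p.1
          · simp [Function.uncurry, hS, mem_setOf_eq, hp]
          · simp [Function.uncurry, hS, mem_setOf_eq, hp]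
        rw [heq]
        refine (integrable_const Cd).mono'
          (((hDcont.measurable.comp measurable_fst).indicator hSmeas).aestronglyMeasurable) ?_
        refine Filter.Eventually.of_forall fun p => ?_
        rw [norm_indicator_eq_indicator_norm]
        refine le_trans (indicator_le_self' (fun _ _ => norm_nonneg _) p) ?_
        simpa using hCd p.1
      calc ∫ x in Ω', (μ (Iic (H x))).toReal * D x
          = ∫ x in Ω', (∫ s, (if s ≤ H x then (1:ℝ) else 0) * D x ∂μ) := by
            refine integral_congr_ae (Filter.Eventually.of_forall fun x => ?_)
            show (μ (Iic (H x))).toReal * D x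
              = ∫ s, (if s ≤ H x then (1:ℝ) else 0) * D x ∂μ
            rw [hrep x, ← integral_mul_const]
        _ = ∫ s, (∫ x in Ω', (if s ≤ H x then (1:ℝ) else 0) * D x) ∂μ := hswap
    -- bound the inner integrals uniformly
    have hinner : ∀ s : ℝ, ‖∫ x in Ω', (if s ≤ H x then (1:ℝ) else 0) * D x‖ ≤ A * B := by
      intro s
      rw [Real.norm_eq_abs]
      have := key_indicator Ω' hop hfin H hHmeas H' K hH'lip hHeq A hA0 hA ρ hρmeas B hB0 hB
        hpush Φ hΦ hΦc hΦs hΦ1 s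
      simpa [hD, divg] using this
    have hμpbound : ‖∫ s, (∫ x in Ω', (if s ≤ H x then (1:ℝ) else 0) * D x) ∂μp‖
        ≤ (A * B) * (μp univ).toReal :=
      norm_integral_le_of_norm_le_const (Filter.Eventually.of_forall hinner)
    have hμqbound : ‖∫ s, (∫ x in Ω', (if s ≤ H x then (1:ℝ) else 0) * D x) ∂μq‖
        ≤ (A * B) * (μq univ).toReal :=
      norm_integral_le_of_norm_le_const (Filter.Eventually.of_forall hinner)
    have hAB0 : 0 ≤ A * B := mul_nonneg hA0 hB0
    calc |∫ x in Ω', g (H x) * D x|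
        = |(∫ x in Ω', fp (H x) * D x) - ∫ x in Ω', fq (H x) * D x| := by rw [hS1, hS2]
      _ ≤ |∫ x in Ω', fp (H x) * D x| + |∫ x in Ω', fq (H x) * D x| := abs_sub _ _
      _ ≤ (A * B) * (μp univ).toReal + (A * B) * (μq univ).toReal := by
          have h1 := hμpbound
          have h2 := hμqbound
          rw [← hfub μp hμpf, Real.norm_eq_abs] at h1
          rw [← hfub μq hμqf, Real.norm_eq_abs] at h2
          exact add_le_add h1 h2
      _ = (A * B) * ((μp univ).toReal + (μq univ).toReal) := by ring
      _ ≤ (A * B) * T := mul_le_mul_of_nonneg_left hmassR hAB0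
  constructor
  · exact ⟨hIntOn, (A * B) * T, fun Φ hΦ hΦc hΦs hΦ1 =>
      le_trans (le_abs_self _) (key Φ hΦ hΦc hΦs hΦ1)⟩
  · rw [totVarOn]
    refine iSup_le ?_
    rintro ⟨Φ, hΦ, hΦc, hΦs, hΦ1⟩
    calc ENNReal.ofReal (∫ x in Ω', g (H x) * divg Φ x)
        ≤ ENNReal.ofReal ((A * B) * T) :=
          ENNReal.ofReal_le_ofReal (le_trans (le_abs_self _) (key Φ hΦ hΦc hΦs hΦ1))
      _ = ENNReal.ofReal (A * B) * ENNReal.ofReal T :=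
          ENNReal.ofReal_mul (mul_nonneg hA0 hB0)
      _ = ENNReal.ofReal (A * B) * eVariationOn g Set.univ := by
          rw [hT, ENNReal.ofReal_toReal hgBV]
end

section
/- Let b : ℝ² → ℝ² be continuous with bounded support and let H ∈ C¹_c(ℝ²) satisfy b = ∇⊥H. Then the map h ↦ min_{H⁻¹(h)} |b| is continuous on the set ℛ of regular values of H (for h ∈ ℛ the level set H⁻¹(h) is compact and nonempty, so the minimum is attained). -/
open MeasureTheory Set Metric Filter
open scoped ENNReal NNReal Topology
lemma aux_bdd (b : E2 → E2) (s : Set E2) :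
    BddBelow ((fun y => ‖b y‖) '' s) := by
  refine ⟨0, ?_⟩
  rintro y ⟨z, -, rfl⟩; exact norm_nonneg _

lemma aux_bzero (b : E2 → E2) (H : E2 → ℝ) (hHc : HasCompactSupport H)
    (hHam : ∀ x : E2, IsPerpGradAt b H x) :
    ∃ x : E2, H x = 0 ∧ b x = 0 := by
  obtain ⟨x, hx⟩ : ∃ x : E2, x ∉ tsupport H := by
    by_contra hc
    push_neg at hc
    exact hHc.ne_univ (Set.eq_univ_of_forall hc)
  have hU : (tsupport H)ᶜ ∈ 𝓝 x := (isClosed_tsupport H).isOpen_compl.mem_nhds hx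
  have hEq : H =ᶠ[𝓝 x] (fun _ => 0) :=
    Filter.eventuallyEq_of_mem hU fun y hy => image_eq_zero_of_notMem_tsupport hy
  have hf : fderiv ℝ H x = 0 := by
    rw [hEq.fderiv_eq]; exact fderiv_const_apply 0
  refine ⟨x, image_eq_zero_of_notMem_tsupport hx, ?_⟩
  have h0 := (hHam x).1
  have h1 := (hHam x).2
  rw [hf] at h0 h1
  simp only [ContinuousLinearMap.zero_apply, neg_zero] at h0 h1
  ext i
  fin_cases i <;> simp [h0, h1]

lemma aux_min (b : E2 → E2) (hbcont : Continuous b)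
    (H : E2 → ℝ) (hHcont : Continuous H) (hHc : HasCompactSupport H)
    (h : ℝ) (hh0 : h ≠ 0) (x₁ : E2) (hx₁ : H x₁ = h) :
    IsCompact (H ⁻¹' {h}) ∧ H ⁻¹' {h} ⊆ tsupport H ∧
      ∃ x, H x = h ∧ (∀ y, H y = h → ‖b x‖ ≤ ‖b y‖) ∧
      ‖b x‖ = sInf ((fun y => ‖b y‖) '' (H ⁻¹' {h})) := by
  have hsub : H ⁻¹' {h} ⊆ tsupport H := by
    intro x hx
    by_contra hc
    exact hh0 (by rw [← Set.mem_singleton_iff.1 hx, image_eq_zero_of_notMem_tsupport hc])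
  have hcomp : IsCompact (H ⁻¹' {h}) :=
    hHc.of_isClosed_subset (isClosed_singleton.preimage hHcont) hsub
  obtain ⟨x, hxmem, hmin⟩ := hcomp.exists_isMinOn ⟨x₁, hx₁⟩ (hbcont.norm.continuousOn)
  refine ⟨hcomp, hsub, x, hxmem, fun y hy => hmin hy, le_antisymm ?_ ?_⟩
  · exact le_csInf ⟨_, ⟨x, hxmem, rfl⟩⟩ (by rintro _ ⟨z, hz, rfl⟩; exact hmin hz)
  · exact csInf_le (aux_bdd b _) ⟨x, hxmem, rfl⟩


/-- continuity of the minimal speed on regular values.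
Let `b : ℝ² → ℝ²` be continuous with bounded support and `H ∈ C¹_c(ℝ²)` with
`b = ∇⊥H`.  Then the map `h ↦ min_{H⁻¹(h)} |b|` is continuous on the set `ℛ`
of regular values of `H`; for `h ∈ ℛ` the level set `H⁻¹(h)` is compact and
nonempty, so the minimum is attained. -/
theorem stmt11
    (b : E2 → E2) (hbcont : Continuous b)
    (hbsupp : Bornology.IsBounded (Function.support b))
    (H : E2 → ℝ) (hH : ContDiff ℝ 1 H) (hHc : HasCompactSupport H)
    (hHam : ∀ x : E2, IsPerpGradAt b H x)
    (S : Set ℝ) (hS : S = {h : ℝ | ∃ x : E2, H x = h ∧ b x = 0})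
    (Rs : Set ℝ) (hRs : Rs = H '' Set.univ \ S) :
    (∀ h ∈ Rs, IsCompact (H ⁻¹' {h}) ∧ (H ⁻¹' {h}).Nonempty ∧
      ∃ x ∈ H ⁻¹' {h}, ‖b x‖ = sInf ((fun y => ‖b y‖) '' (H ⁻¹' {h}))) ∧
    ContinuousOn (fun h => sInf ((fun y => ‖b y‖) '' (H ⁻¹' {h}))) Rs := by
  subst hS hRs
  have hHcont := hH.continuous
  have hne0 : ∀ h : ℝ,
      h ∈ H '' Set.univ \ {h | ∃ x, H x = h ∧ b x = 0} → h ≠ 0 := by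
    rintro h ⟨-, hns⟩ rfl
    obtain ⟨x, hx1, hx2⟩ := aux_bzero b H hHc hHam
    exact hns ⟨x, hx1, hx2⟩
  constructor
  · rintro h hh
    obtain ⟨x₁, -, hx₁⟩ := hh.1
    obtain ⟨hcomp, -, x, hx, -, heq⟩ :=
      aux_min b hbcont H hHcont hHc h (hne0 h hh) x₁ hx₁
    exact ⟨hcomp, ⟨x₁, hx₁⟩, x, hx, heq⟩
  · intro h₀ hh₀
    obtain ⟨⟨x₁, -, hx₁⟩, hns₀⟩ := hh₀
    obtain ⟨-, -, x₀, hx₀, hmin₀, heq₀⟩ :=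
      aux_min b hbcont H hHcont hHc h₀ (hne0 h₀ ⟨⟨x₁, trivial, hx₁⟩, hns₀⟩) x₁ hx₁
    rw [Metric.continuousWithinAt_iff]
    intro ε hε
    have hbx₀ : b x₀ ≠ 0 := fun hb => hns₀ ⟨x₀, hx₀, hb⟩
    -- a direction of strict increase
    obtain ⟨v, hv⟩ : ∃ v : E2, 0 < fderiv ℝ H x₀ v := by
      by_contra hc
      push_neg at hc
      have hz : ∀ v, fderiv ℝ H x₀ v = 0 := by
        intro v
        have h1 := hc v
        have h2 := hc (-v)
        rw [map_neg] at h2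
        linarith
      apply hbx₀
      ext i
      fin_cases i <;> simp [(hHam x₀).1, (hHam x₀).2, hz]
    -- ball around x₀ where ‖b‖ < ‖b x₀‖ + ε
    obtain ⟨r, hr, hball⟩ : ∃ r > 0, ∀ y : E2, dist y x₀ < r → ‖b y‖ < ‖b x₀‖ + ε := by
      have hcb := hbcont.norm.continuousAt (x := x₀)
      rw [Metric.continuousAt_iff] at hcb
      obtain ⟨r, hr, hb⟩ := hcb ε hε
      refine ⟨r, hr, fun y hy => ?_⟩
      have := hb hy
      rw [Real.dist_eq] at this
      linarith [(abs_lt.1 this).2]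
    -- derivative along the segment
    have hgderiv : HasDerivAt (fun t : ℝ => H (x₀ + t • v)) (fderiv ℝ H x₀ v) 0 := by
      have hline : HasDerivAt (fun t : ℝ => x₀ + t • v) v 0 := by
        simpa using ((hasDerivAt_id (0:ℝ)).smul_const v).const_add x₀
      have hHd : HasFDerivAt H (fderiv ℝ H x₀) ((fun t : ℝ => x₀ + t • v) 0) := by
        simpa using (hH.differentiable one_ne_zero x₀).hasFDerivAt
      simpa [Function.comp_def] using hHd.comp_hasDerivAt 0 hline
    set g : ℝ → ℝ := fun t => H (x₀ + t • v) with hgdef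
    have hg0 : g 0 = h₀ := by simp [hgdef, hx₀]
    have hslopeev : ∀ᶠ t in 𝓝[≠] (0:ℝ), 0 < slope g 0 t :=
      (hasDerivAt_iff_tendsto_slope.1 hgderiv).eventually (lt_mem_nhds hv)
    rw [eventually_nhdsWithin_iff, Metric.eventually_nhds_iff] at hslopeev
    obtain ⟨t₀, ht₀, hslope⟩ := hslopeev
    set t : ℝ := min (t₀ / 2) (r / (‖v‖ + 1) / 2) with htdef
    have hvpos : (0:ℝ) < ‖v‖ + 1 := by positivity
    have ht : 0 < t := by
      apply lt_min
      · linarith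
      · positivity
    have htt₀ : t < t₀ := lt_of_le_of_lt (min_le_left _ _) (by linarith)
    have htv : t * ‖v‖ < r := by
      have h1 : t ≤ r / (‖v‖ + 1) / 2 := min_le_right _ _
      have h2 : r / (‖v‖ + 1) / 2 * ‖v‖ < r := by
        rw [div_div]
        rw [div_mul_eq_mul_div, div_lt_iff₀ (by positivity)]
        nlinarith [norm_nonneg v]
      calc t * ‖v‖ ≤ r / (‖v‖ + 1) / 2 * ‖v‖ :=
            mul_le_mul_of_nonneg_right h1 (norm_nonneg v)
        _ < r := h2
    have hst : 0 < slope g 0 t := by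
      apply hslope (by rw [Real.dist_eq, sub_zero, abs_of_pos ht]; exact htt₀) ht.ne'
    have hst' : 0 < slope g 0 (-t) := by
      apply hslope _ (by simp [ht.ne'])
      rw [Real.dist_eq, sub_zero, abs_neg, abs_of_pos ht]; exact htt₀
    have hgt : h₀ < g t := by
      rw [slope_def_field, hg0, sub_zero, div_pos_iff] at hst
      rcases hst with ⟨h1, -⟩ | ⟨-, h2⟩
      · linarith
      · linarith
    have hlt : g (-t) < h₀ := by
      rw [slope_def_field, hg0, sub_zero, div_pos_iff] at hst'
      rcases hst' with ⟨-, h2⟩ | ⟨h1, -⟩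
      · linarith
      · linarith
    set δ₁ : ℝ := min (g t - h₀) (h₀ - g (-t)) with hδ₁def
    have hδ₁ : 0 < δ₁ := lt_min (by linarith) (by linarith)
    -- upper bound
    have hupper : ∀ h : ℝ, |h - h₀| < δ₁ → ∃ x, H x = h ∧ ‖b x‖ < ‖b x₀‖ + ε := by
      intro h hh
      obtain ⟨hh1, hh2⟩ := abs_lt.1 hh
      have h1 : g (-t) < h := by
        have := min_le_right (g t - h₀) (h₀ - g (-t))
        linarith
      have h2 : h < g t := by
        have := min_le_left (g t - h₀) (h₀ - g (-t))
        linarith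
      have hgc : ContinuousOn g (Set.Icc (-t) t) :=
        (hHcont.comp (continuous_const.add (continuous_id.smul continuous_const))).continuousOn
      obtain ⟨s, hs, hgs⟩ := intermediate_value_Icc (by linarith : -t ≤ t) hgc
        ⟨h1.le, h2.le⟩
      refine ⟨x₀ + s • v, hgs, hball _ ?_⟩
      have hd : dist (x₀ + s • v) x₀ = |s| * ‖v‖ := by
        rw [dist_eq_norm]
        simp [norm_smul, abs_of_nonneg]
      rw [hd]
      have habs : |s| ≤ t := abs_le.2 ⟨hs.1, hs.2⟩
      calc |s| * ‖v‖ ≤ t * ‖v‖ := mul_le_mul_of_nonneg_right habs (norm_nonneg v)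
        _ < r := htv
    -- lower bound
    have hK : IsCompact (tsupport H ∩ {x : E2 | ‖b x‖ ≤ ‖b x₀‖ - ε}) :=
      hHc.inter_right (isClosed_le hbcont.norm continuous_const)
    have himg : IsCompact (H '' (tsupport H ∩ {x : E2 | ‖b x‖ ≤ ‖b x₀‖ - ε})) :=
      hK.image hHcont
    have hh₀nimg : h₀ ∉ H '' (tsupport H ∩ {x : E2 | ‖b x‖ ≤ ‖b x₀‖ - ε}) := by
      rintro ⟨x, ⟨-, hxb⟩, hxH⟩
      have := hmin₀ x hxH
      simp only [Set.mem_setOf_eq] at hxb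
      linarith
    obtain ⟨δ₂, hδ₂, hballδ₂⟩ := Metric.isOpen_iff.1 himg.isClosed.isOpen_compl h₀ hh₀nimg
    refine ⟨min δ₁ δ₂, lt_min hδ₁ hδ₂, ?_⟩
    intro h hhmem hdist
    obtain ⟨x₁', -, hx₁'⟩ := hhmem.1
    obtain ⟨-, hsubh, x, hx, -, heqh⟩ :=
      aux_min b hbcont H hHcont hHc h (hne0 h hhmem) x₁' hx₁'
    -- upper estimate for m h
    obtain ⟨x', hx'H, hx'b⟩ := hupper h (by
      rw [Real.dist_eq] at hdist
      exact lt_of_lt_of_le hdist (min_le_left _ _))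
    have hmh_le : sInf ((fun y => ‖b y‖) '' (H ⁻¹' {h})) ≤ ‖b x'‖ :=
      csInf_le (aux_bdd b _) ⟨x', hx'H, rfl⟩
    -- lower estimate for m h
    have hx_ts : x ∈ tsupport H := hsubh hx
    have hmh_gt : ‖b x₀‖ - ε < ‖b x‖ := by
      by_contra hc
      push_neg at hc
      have hmem : h ∈ H '' (tsupport H ∩ {x : E2 | ‖b x‖ ≤ ‖b x₀‖ - ε}) :=
        ⟨x, ⟨hx_ts, hc⟩, hx⟩
      exact hballδ₂ (lt_of_lt_of_le hdist (min_le_right _ _)) hmem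
    simp only [Real.dist_eq]
    rw [← heqh, ← heq₀]
    rw [abs_lt]
    constructor
    · linarith
    · have := heqh ▸ hmh_le
      linarith [heqh ▸ hmh_le]
end
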